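/- arXiv:2006.02599 — 3 statements merged into one kernel-verified Lean document; each statement's English description precedes it below -/
import Mathlib

section
/- Let n ≥ 2, let G be a simple graph on the vertex set [n] with G ∈ C_cyclic, let γ ≥ 0, and suppose every 2-matching of G has more than γ connected components. Then κ(G) ≤ n + 11n/ln n − γ. -/
/-!
Every component of a 2-matching `H` is a path or a cycle, so it spans at most as many edges as
vertices, with equality exactly for cycles. Summing over components,
`e(H) + c(H) ≤ n + #cycles`. The vertex set of a cycle of `H` is connected in `G` and spans at
least as many edges of `G` as vertices, so the cycles of length at most `ln n / 10` are at most
`n / ln n` in number by `G ∈ C_cyclic`, and being disjoint, the longer ones are at most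
`10 n / ln n`. Applied to a maximum 2-matching, which has more than `γ` components, this gives
`κ(G) ≤ n + 11 n / ln n - γ`.
-/

/-- Number of edges of `G` with both endpoints in `S`. -/
def edgesWithin {n : ℕ} (G : SimpleGraph (Fin n)) [DecidableRel G.Adj] (S : Finset (Fin n)) : ℕ :=
  (G.edgeFinset.filter (fun e => ∀ v, v ∈ e → v ∈ S)).card

/-- `H` is a 2-matching of `G`: a spanning subgraph of maximum degree at most 2. -/
def IsTwoMatching {n : ℕ} (G H : SimpleGraph (Fin n)) : Prop :=
  H ≤ G ∧ ∀ v, ({u | H.Adj v u} : Set (Fin n)).ncard ≤ 2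

/-- `κ(G)`: the number of edges in a maximum 2-matching of `G`. -/
noncomputable def kappa {n : ℕ} (G : SimpleGraph (Fin n)) : ℕ :=
  sSup {m : ℕ | ∃ H : SimpleGraph (Fin n), IsTwoMatching G H ∧ H.edgeSet.ncard = m}

/-- The family `C_cyclic`: at most `n / ln n` subsets `S` with `|S| ≤ ln n / 10` inducing a
connected subgraph with at least `|S|` edges. -/
def CCyclic {n : ℕ} (G : SimpleGraph (Fin n)) [DecidableRel G.Adj] : Prop :=
  (({S : Finset (Fin n) | (S.card : ℝ) ≤ Real.log n / 10 ∧
      (G.induce (S : Set (Fin n))).Connected ∧ S.card ≤ edgesWithin G S} :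
        Set (Finset (Fin n))).ncard : ℝ) ≤ (n : ℝ) / Real.log n

open SimpleGraph Finset

namespace SimpleGraph

variable {V : Type*} {H : SimpleGraph V}

lemma connectedComponentMk_eq_of_mem_edgeSet {e : Sym2 V} (he : e ∈ H.edgeSet) {v w : V}
    (hv : v ∈ e) (hw : w ∈ e) : H.connectedComponentMk v = H.connectedComponentMk w := by
  induction e using Sym2.ind with
  | _ a b =>
    have hab : H.connectedComponentMk a = H.connectedComponentMk b :=
      ConnectedComponent.sound (H.mem_edgeSet.mp he).reachable
    rcases Sym2.mem_iff.mp hv with rfl | rfl <;> rcases Sym2.mem_iff.mp hw with rfl | rfl <;>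
      simp [hab]

variable [Fintype V] [DecidableEq V] [DecidableRel H.Adj]

lemma sum_card_supp_toFinset :
    ∑ c : H.ConnectedComponent, #c.supp.toFinset = Fintype.card V := by
  classical
  rw [← card_univ, card_eq_sum_card_fiberwise (f := H.connectedComponentMk) (t := univ)
    (fun _ _ => mem_coe.mpr (mem_univ _))]
  refine sum_congr rfl fun c _ => congrArg card ?_
  ext v
  simp [ConnectedComponent.mem_supp_iff]

lemma card_mul_le_of_le_card_supp (s : Finset H.ConnectedComponent) {L : ℝ}
    (hs : ∀ c ∈ s, L ≤ #c.supp.toFinset) : #s * L ≤ Fintype.card V := by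
  calc #s * L = ∑ _c ∈ s, L := by rw [sum_const, nsmul_eq_mul]
    _ ≤ ∑ c ∈ s, (#c.supp.toFinset : ℝ) := sum_le_sum hs
    _ ≤ ∑ c : H.ConnectedComponent, (#c.supp.toFinset : ℝ) :=
        sum_le_univ_sum_of_nonneg fun _ => Nat.cast_nonneg _
    _ = Fintype.card V := by rw [← Nat.cast_sum, sum_card_supp_toFinset]

end SimpleGraph

section EdgesWithin

variable {n : ℕ} {G H : SimpleGraph (Fin n)} [DecidableRel G.Adj] [DecidableRel H.Adj]

lemma edgesWithin_mono (h : H ≤ G) (S : Finset (Fin n)) : edgesWithin H S ≤ edgesWithin G S :=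
  card_le_card fun _ he => by
    rw [mem_filter] at he ⊢
    exact ⟨edgeFinset_mono h he.1, he.2⟩

lemma edgesWithin_le_card_of_degree_le_two (hdeg : ∀ v, H.degree v ≤ 2) (S : Finset (Fin n)) :
    edgesWithin H S ≤ #S := by
  have := card_mul_le_card_mul (fun (e : Sym2 (Fin n)) v => v ∈ e) (m := 2) (n := 2)
    (s := H.edgeFinset.filter fun e => ∀ v, v ∈ e → v ∈ S) (t := S) ?_ ?_
  · unfold edgesWithin; omega
  · intro e he
    rw [mem_filter] at he
    induction e using Sym2.ind with
    | _ a b =>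
      have hab : a ≠ b := (mem_edgeFinset.mp he.1).ne
      calc 2 = #{a, b} := (card_pair hab).symm
        _ ≤ _ := card_le_card fun x hx => by
          rw [mem_bipartiteAbove]
          rcases mem_insert.mp hx with rfl | hx
          · exact ⟨he.2 x (by simp), by simp⟩
          · rw [mem_singleton.mp hx]
            exact ⟨he.2 b (by simp), by simp⟩
  · intro v _
    calc _ ≤ #(H.incidenceFinset v) := card_le_card fun e he => by
          rw [mem_bipartiteBelow, mem_filter] at he
          exact (mem_incidenceFinset _ _ _).mpr ⟨mem_edgeFinset.mp he.1.1, he.2⟩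
      _ ≤ 2 := (H.card_incidenceFinset_eq_degree v).trans_le (hdeg v)

lemma sum_edgesWithin_supp_toFinset :
    ∑ c : H.ConnectedComponent, edgesWithin H c.supp.toFinset = #H.edgeFinset := by
  classical
  rw [card_eq_sum_card_fiberwise (f := fun e => H.connectedComponentMk e.out.1) (t := univ)
    (fun _ _ => mem_coe.mpr (mem_univ _))]
  refine sum_congr rfl fun c _ => congrArg card (filter_congr fun e he => ?_)
  have hmk {v w : Fin n} :
      v ∈ e → w ∈ e → H.connectedComponentMk v = H.connectedComponentMk w :=
    connectedComponentMk_eq_of_mem_edgeSet (mem_edgeFinset.mp he)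
  simp only [Set.mem_toFinset, ConnectedComponent.mem_supp_iff]
  exact ⟨fun h => h _ (Sym2.out_fst_mem e), fun h v hv => (hmk hv (Sym2.out_fst_mem e)).trans h⟩

/-- When `H` has maximum degree two, these are exactly the components of `H` that are cycles. -/
def cyclicComponents (H : SimpleGraph (Fin n)) [DecidableRel H.Adj] :
    Finset H.ConnectedComponent :=
  {c | #c.supp.toFinset ≤ edgesWithin H c.supp.toFinset}

lemma card_edgeFinset_add_card_connectedComponent_le (hdeg : ∀ v, H.degree v ≤ 2) :
    #H.edgeFinset + Fintype.card H.ConnectedComponent ≤ n + #(cyclicComponents H) := by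
  calc #H.edgeFinset + Fintype.card H.ConnectedComponent
      = ∑ c : H.ConnectedComponent, (edgesWithin H c.supp.toFinset + 1) := by
        rw [sum_add_distrib, sum_edgesWithin_supp_toFinset, sum_const, card_univ, smul_eq_mul,
          mul_one]
    _ ≤ ∑ c : H.ConnectedComponent, (#c.supp.toFinset +
        if #c.supp.toFinset ≤ edgesWithin H c.supp.toFinset then 1 else 0) :=
        sum_le_sum fun c _ => by
          have := edgesWithin_le_card_of_degree_le_two hdeg c.supp.toFinset
          split_ifs <;> omega
    _ = n + #(cyclicComponents H) := by
        rw [sum_add_distrib, sum_card_supp_toFinset, Fintype.card_fin, cyclicComponents,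
          card_filter]

end EdgesWithin

section TwoMatching

variable {n : ℕ} {G H : SimpleGraph (Fin n)}

lemma IsTwoMatching.degree_le [DecidableRel H.Adj] (hH : IsTwoMatching G H) (v : Fin n) :
    H.degree v ≤ 2 := by
  rw [← card_neighborFinset_eq_degree, ← Set.ncard_coe_finset, coe_neighborFinset]
  exact hH.2 v

variable [DecidableRel G.Adj] [DecidableRel H.Adj]

lemma IsTwoMatching.card_small_cyclicComponents_le (hG : CCyclic G) (hH : IsTwoMatching G H) :
    (#{c ∈ cyclicComponents H | (#c.supp.toFinset : ℝ) ≤ Real.log n / 10} : ℝ) ≤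
      n / Real.log n := by
  refine le_trans ?_ hG
  have hinj : Function.Injective fun c : H.ConnectedComponent => c.supp.toFinset :=
    fun c d hcd => ConnectedComponent.supp_inj.mp (Set.toFinset_inj.mp hcd)
  rw [← card_image_of_injective _ hinj, ← Set.ncard_coe_finset]
  refine Nat.cast_le.mpr (Set.ncard_le_ncard ?_ (Set.toFinite _))
  intro S hS
  obtain ⟨c, hc, rfl⟩ := mem_image.mp (mem_coe.mp hS)
  obtain ⟨hcyc, hsmall⟩ := mem_filter.mp hc
  refine ⟨hsmall, ?_, (mem_filter.mp hcyc).2.trans (edgesWithin_mono hH.1 _)⟩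
  rw [Set.coe_toFinset]
  exact c.maximal_connected_induce_supp.prop.mono fun _ _ hab => hH.1 hab

theorem IsTwoMatching.card_edgeSet_add_card_connectedComponent_le (hn : 2 ≤ n) (hG : CCyclic G)
    (hH : IsTwoMatching G H) :
    (H.edgeSet.ncard : ℝ) + Nat.card H.ConnectedComponent ≤ n + 11 * n / Real.log n := by
  have hlog : 0 < Real.log n := Real.log_pos (by exact_mod_cast hn)
  have hcount := card_edgeFinset_add_card_connectedComponent_le hH.degree_le
  rw [← card_filter_add_card_filter_not (s := cyclicComponents H)
    (fun c => (#c.supp.toFinset : ℝ) ≤ Real.log n / 10)] at hcount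
  have hlarge := card_mul_le_of_le_card_supp
    {c ∈ cyclicComponents H | ¬(#c.supp.toFinset : ℝ) ≤ Real.log n / 10}
    fun c hc => (not_le.mp (mem_filter.mp hc).2).le
  rw [Fintype.card_fin, ← le_div_iff₀ (div_pos hlog (by norm_num)), div_div_eq_mul_div] at hlarge
  rw [← coe_edgeFinset, Set.ncard_coe_finset, Nat.card_eq_fintype_card]
  calc (#H.edgeFinset + Fintype.card H.ConnectedComponent : ℝ)
      ≤ n + (#{c ∈ cyclicComponents H | (#c.supp.toFinset : ℝ) ≤ Real.log n / 10} +
        #{c ∈ cyclicComponents H | ¬(#c.supp.toFinset : ℝ) ≤ Real.log n / 10} : ℕ) := by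
        exact_mod_cast hcount
    _ ≤ n + (n / Real.log n + n * 10 / Real.log n) := by
        push_cast
        gcongr
        exact hH.card_small_cyclicComponents_le hG
    _ = n + 11 * n / Real.log n := by ring

end TwoMatching

lemma exists_isTwoMatching_ncard_edgeSet_eq_kappa {n : ℕ} (G : SimpleGraph (Fin n)) :
    ∃ H, IsTwoMatching G H ∧ H.edgeSet.ncard = kappa G := by
  have hbot : IsTwoMatching G ⊥ := ⟨bot_le, fun v => by simp⟩
  refine Nat.sSup_mem (s := {m | ∃ H, IsTwoMatching G H ∧ H.edgeSet.ncard = m})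
    ⟨0, ⊥, hbot, by simp⟩ ⟨Nat.card (Sym2 (Fin n)), ?_⟩
  rintro _ ⟨H, -, rfl⟩
  exact Set.ncard_univ (Sym2 (Fin n)) ▸ Set.ncard_le_ncard (Set.subset_univ _)

theorem stmt_3_general {n : ℕ} (hn : 2 ≤ n) (G : SimpleGraph (Fin n)) [DecidableRel G.Adj]
    (hG : CCyclic G) (γ : ℝ)
    (hmatch : ∀ H : SimpleGraph (Fin n), IsTwoMatching G H →
      γ < Nat.card H.ConnectedComponent) :
    (kappa G : ℝ) ≤ n + 11 * n / Real.log n - γ := by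
  classical
  obtain ⟨H, hH, hκ⟩ := exists_isTwoMatching_ncard_edgeSet_eq_kappa G
  have hbound := hH.card_edgeSet_add_card_connectedComponent_le hn hG
  have hγ := hmatch H hH
  rw [← hκ]
  linarith

theorem stmt_3 {n : ℕ} (hn : 2 ≤ n) (G : SimpleGraph (Fin n)) [DecidableRel G.Adj]
    (hG : CCyclic G) (γ : ℝ) (hγ : 0 ≤ γ)
    (hmatch : ∀ H : SimpleGraph (Fin n), IsTwoMatching G H →
      γ < Nat.card H.ConnectedComponent) :
    (kappa G : ℝ) ≤ n + 11 * n / Real.log n - γ :=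
  stmt_3_general hn G hG γ hmatch
end

section
/- For every real number α > 2 there exists a unique λ > 0 such that λ(1 − e^{−λ})/(1 − e^{−λ} − λe^{−λ}) = α. Moreover, the function f(λ) = λ(1 − e^{−λ})/(1 − e^{−λ} − λe^{−λ}) is strictly increasing on (0, ∞). -/
/-!
Multiplying numerator and denominator by `e^λ` gives `f λ = λ + λ² / (e^λ - 1 - λ)`, so
`λ < f λ ≤ λ + 2` because `e^λ ≥ 1 + λ + λ²/2`; by the intermediate value theorem on `[α - 2, α]`
every `α > 2` is a value of `f`. Monotonicity comes from `1 / f λ = 1 / λ - 1 / (e^λ - 1)`, whose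
derivative `-1/λ² + e^λ / (e^λ - 1)²` is negative since `λ e^{λ/2} < e^λ - 1`, i.e. `λ/2 < sinh (λ/2)`.
-/

open Real Set

noncomputable def expRatio (x : ℝ) : ℝ :=
  x * (1 - exp (-x)) / (1 - exp (-x) - x * exp (-x))

lemma mul_exp_half_lt_exp_sub_one {x : ℝ} (hx : 0 < x) : x * exp (x / 2) < exp x - 1 := by
  have h : x / 2 < sinh (x / 2) := self_lt_sinh_iff.2 (half_pos hx)
  rw [sinh_eq] at h
  calc x * exp (x / 2) < (exp (x / 2) - exp (-(x / 2))) * exp (x / 2) := by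
        gcongr; linarith
    _ = exp x - 1 := by
        rw [sub_mul, ← exp_add, ← exp_add, add_halves, neg_add_cancel, exp_zero]

lemma exp_mul_sq_lt_exp_sub_one_sq {x : ℝ} (hx : 0 < x) : exp x * x ^ 2 < (exp x - 1) ^ 2 :=
  calc exp x * x ^ 2 = (x * exp (x / 2)) ^ 2 := by
        rw [mul_pow, ← exp_nat_mul]; ring_nf
    _ < (exp x - 1) ^ 2 :=
        pow_lt_pow_left₀ (mul_exp_half_lt_exp_sub_one hx) (by positivity) two_ne_zero

lemma exp_sub_one_sub_pos {x : ℝ} (hx : 0 < x) : 0 < exp x - 1 - x := by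
  linarith [add_one_lt_exp hx.ne']

lemma expRatio_denom_pos {x : ℝ} (hx : 0 < x) : 0 < 1 - exp (-x) - x * exp (-x) := by
  have h : 1 - exp (-x) - x * exp (-x) = exp (-x) * (exp x - 1 - x) := by
    rw [mul_sub, mul_sub, ← exp_add, neg_add_cancel, exp_zero, mul_one, mul_comm]
  rw [h]
  exact mul_pos (exp_pos _) (exp_sub_one_sub_pos hx)

lemma expRatio_eq_add {x : ℝ} (hx : 0 < x) :
    expRatio x = x + x ^ 2 / (exp x - 1 - x) := by
  have hd := (exp_sub_one_sub_pos hx).ne'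
  have hD := (expRatio_denom_pos hx).ne'
  rw [expRatio]
  rw [exp_neg] at hD ⊢
  field_simp at hD ⊢
  ring

lemma expRatio_eq_inv {x : ℝ} (hx : 0 < x) :
    expRatio x = (x⁻¹ - (exp x - 1)⁻¹)⁻¹ := by
  have h1 : exp x - 1 ≠ 0 := (sub_pos.2 (one_lt_exp_iff.2 hx)).ne'
  have hd := (exp_sub_one_sub_pos hx).ne'
  rw [expRatio_eq_add hx, inv_sub_inv hx.ne' h1, inv_div]
  field_simp
  ring

lemma lt_expRatio {x : ℝ} (hx : 0 < x) : x < expRatio x := by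
  rw [expRatio_eq_add hx]
  have := exp_sub_one_sub_pos hx
  linarith [show 0 < x ^ 2 / (exp x - 1 - x) by positivity]

lemma expRatio_le_add_two {x : ℝ} (hx : 0 < x) : expRatio x ≤ x + 2 := by
  rw [expRatio_eq_add hx, add_le_add_iff_left,
    div_le_iff₀ (exp_sub_one_sub_pos hx)]
  linarith [quadratic_le_exp_of_nonneg hx.le]

lemma continuousOn_expRatio : ContinuousOn expRatio (Ioi 0) :=
  ContinuousOn.div (by fun_prop) (by fun_prop) fun _ hx => (expRatio_denom_pos hx).ne'

lemma strictAntiOn_inv_sub_inv_exp_sub_one :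
    StrictAntiOn (fun x => x⁻¹ - (exp x - 1)⁻¹) (Ioi 0) := by
  have hderiv : ∀ x ∈ Ioi (0 : ℝ), HasDerivAt (fun x => x⁻¹ - (exp x - 1)⁻¹)
      (-(x ^ 2)⁻¹ - -exp x / (exp x - 1) ^ 2) x := fun x hx =>
    (hasDerivAt_inv (ne_of_gt hx)).sub
      (((hasDerivAt_exp x).sub_const 1).inv (sub_pos.2 (one_lt_exp_iff.2 hx)).ne')
  refine strictAntiOn_of_hasDerivWithinAt_neg (convex_Ioi 0)
    (fun x hx => (hderiv x hx).continuousAt.continuousWithinAt)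
    (fun x hx => (hderiv x (interior_subset hx)).hasDerivWithinAt) fun x hx => ?_
  rw [interior_Ioi] at hx
  have hx : (0 : ℝ) < x := hx
  have h2 : 0 < (exp x - 1) ^ 2 := pow_pos (sub_pos.2 (one_lt_exp_iff.2 hx)) 2
  have : exp x / (exp x - 1) ^ 2 < (x ^ 2)⁻¹ := by
    rw [← one_div, div_lt_div_iff₀ h2 (by positivity)]
    linarith [exp_mul_sq_lt_exp_sub_one_sq hx]
  rw [neg_div, sub_neg_eq_add]
  linarith

lemma strictMonoOn_expRatio : StrictMonoOn expRatio (Ioi 0) := by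
  intro a ha b hb hab
  have hpos : 0 < b⁻¹ - (exp b - 1)⁻¹ := by
    rw [← inv_pos, ← expRatio_eq_inv hb]
    exact hb.trans (lt_expRatio hb)
  rw [expRatio_eq_inv ha, expRatio_eq_inv hb]
  exact inv_strictAnti₀ hpos (strictAntiOn_inv_sub_inv_exp_sub_one ha hb hab)

lemma exists_expRatio_eq {α : ℝ} (hα : 2 < α) : ∃ x ∈ Ioi (0 : ℝ), expRatio x = α := by
  have ha : 0 < α - 2 := by linarith
  obtain ⟨x, hx, hfx⟩ := intermediate_value_Icc (by linarith : α - 2 ≤ α)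
    (continuousOn_expRatio.mono fun y hy => ha.trans_le hy.1)
    ⟨by linarith [expRatio_le_add_two ha], (lt_expRatio (by linarith : 0 < α)).le⟩
  exact ⟨x, ha.trans_le hx.1, hfx⟩

theorem stmt_11 :
    (∀ α : ℝ, 2 < α → ∃! lam : ℝ, 0 < lam ∧
        lam * (1 - Real.exp (-lam)) /
          (1 - Real.exp (-lam) - lam * Real.exp (-lam)) = α) ∧
    StrictMonoOn
      (fun lam : ℝ =>
        lam * (1 - Real.exp (-lam)) / (1 - Real.exp (-lam) - lam * Real.exp (-lam)))
      (Set.Ioi 0) := by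
  refine ⟨fun α hα => ?_, strictMonoOn_expRatio⟩
  obtain ⟨x, hx, hfx⟩ := exists_expRatio_eq hα
  exact ⟨x, ⟨hx, hfx⟩, fun y ⟨hy, hfy⟩ =>
    strictMonoOn_expRatio.injOn hy hx (hfy.trans hfx.symm)⟩
end

section
/- Define ε₁ : [0, 1/2] → ℝ by ε₁(δ) = ln((2^{1+δ} − 1)·ln(2^{1+δ} − 1) − 2^{1+δ}·δ·ln 2 + (1 + ln 2)·2^{δ}) − δ·ln 2 − ln(1 + ln 2). Then ε₁(0) = 0, ε₁ is monotonically increasing on [0, 1/2], and ε₁(δ) > 0 for every δ ∈ (0, 1/2]. -/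
/-!
Substituting `t = 2 ^ δ`, the argument of the outer logarithm of `ε₁` becomes `t * h t` with
`h t = (2 - 1/t) ln (2t - 1) - 2 ln t + 1 + ln 2`, so that `ε₁ δ = ln h(2 ^ δ) - ln h(1)`.
The derivative `h' t = ln (2t - 1) / t²` is positive for `t > 1`, hence `h`, and with it `ε₁`,
is strictly increasing on `δ ≥ 0`.
-/

/-- The penalty function `ε₁` for making `δ·n·ln 2` non-greedy moves in the first phase. -/
noncomputable def eps1 (δ : ℝ) : ℝ :=
  Real.log (((2 : ℝ) ^ (1 + δ) - 1) * Real.log ((2 : ℝ) ^ (1 + δ) - 1) -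
      (2 : ℝ) ^ (1 + δ) * δ * Real.log 2 + (1 + Real.log 2) * (2 : ℝ) ^ δ) -
    δ * Real.log 2 - Real.log (1 + Real.log 2)

open Real Set

noncomputable def eps1Reduced (t : ℝ) : ℝ :=
  (2 - t⁻¹) * log (2 * t - 1) - 2 * log t + (1 + log 2)

lemma eps1Reduced_one : eps1Reduced 1 = 1 + log 2 := by
  norm_num [eps1Reduced]

lemma hasDerivAt_eps1Reduced {t : ℝ} (ht : 1 / 2 < t) :
    HasDerivAt eps1Reduced (log (2 * t - 1) / t ^ 2) t := by
  have ht₀ : t ≠ 0 := by linarith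
  have ht₁ : 2 * t - 1 ≠ 0 := by linarith
  have hlog : HasDerivAt (fun s => log (2 * s - 1)) (2 / (2 * t - 1)) t := by
    simpa using (((hasDerivAt_id t).const_mul 2).sub_const 1).log ht₁
  have hderiv := ((((hasDerivAt_inv ht₀).const_sub 2).mul hlog).sub
    ((hasDerivAt_log ht₀).const_mul 2)).add_const (1 + log 2)
  have hcancel : (2 - t⁻¹) * (2 / (2 * t - 1)) = 2 * t⁻¹ := by
    field_simp
  refine hderiv.congr_deriv ?_
  rw [hcancel]
  ring

lemma strictMonoOn_eps1Reduced : StrictMonoOn eps1Reduced (Ici 1) := by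
  refine strictMonoOn_of_deriv_pos (convex_Ici 1) ?_ fun t ht => ?_
  · exact fun t ht => (hasDerivAt_eps1Reduced (by linarith [mem_Ici.1 ht])).continuousAt
      |>.continuousWithinAt
  · rw [interior_Ici, mem_Ioi] at ht
    rw [(hasDerivAt_eps1Reduced (by linarith)).deriv]
    have : 0 < log (2 * t - 1) := log_pos (by linarith)
    positivity

lemma eps1Reduced_pos {t : ℝ} (ht : 1 ≤ t) : 0 < eps1Reduced t := by
  have h := strictMonoOn_eps1Reduced.monotoneOn (self_mem_Ici) ht ht
  rw [eps1Reduced_one] at h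
  linarith [log_pos one_lt_two]

lemma eps1_eq_log_eps1Reduced {δ : ℝ} (hδ : 0 ≤ δ) :
    eps1 δ = log (eps1Reduced (2 ^ δ)) - log (1 + log 2) := by
  set t : ℝ := 2 ^ δ with ht
  have ht₀ : 0 < t := rpow_pos_of_pos two_pos δ
  have hlog_t : log t = δ * log 2 := log_rpow two_pos δ
  have harg : ((2 : ℝ) ^ (1 + δ) - 1) * log ((2 : ℝ) ^ (1 + δ) - 1) -
      (2 : ℝ) ^ (1 + δ) * δ * log 2 + (1 + log 2) * t = t * eps1Reduced t := by
    rw [rpow_add two_pos, rpow_one, ← ht, eps1Reduced, hlog_t]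
    field_simp
  rw [eps1, harg, log_mul ht₀.ne' (eps1Reduced_pos (one_le_rpow one_le_two hδ)).ne', hlog_t]
  ring

lemma strictMonoOn_eps1 : StrictMonoOn eps1 (Ici 0) := by
  intro a ha b hb hab
  have h1a : (1 : ℝ) ≤ 2 ^ a := one_le_rpow one_le_two ha
  have hpow : (2 : ℝ) ^ a < 2 ^ b := rpow_lt_rpow_of_exponent_lt one_lt_two hab
  have hred := strictMonoOn_eps1Reduced h1a (h1a.trans hpow.le) hpow
  rw [eps1_eq_log_eps1Reduced ha, eps1_eq_log_eps1Reduced hb]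
  linarith [log_lt_log (eps1Reduced_pos h1a) hred]

theorem stmt_14 :
    eps1 0 = 0 ∧ MonotoneOn eps1 (Set.Icc 0 (1 / 2)) ∧
      ∀ δ ∈ Set.Ioc (0 : ℝ) (1 / 2), 0 < eps1 δ := by
  have eps1_zero : eps1 0 = 0 := by
    rw [eps1_eq_log_eps1Reduced le_rfl, rpow_zero, eps1Reduced_one, sub_self]
  refine ⟨eps1_zero, strictMonoOn_eps1.monotoneOn.mono Icc_subset_Ici_self, fun δ hδ => ?_⟩
  rw [← eps1_zero]
  exact strictMonoOn_eps1 self_mem_Ici (mem_Ici.2 hδ.1.le) hδ.1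
end
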